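/- arXiv:2209.08915 — 2 statements merged into one kernel-verified Lean document; each statement's English description precedes it below -/
import Mathlib

section
/- Let σ > 0 and δ ∈ [0, σ²/2). Let y : ℝ → ℝ be continuous with y(s)/s → 0 as s → −∞ and (1/s)∫_s^0 y(η) dη → 0 as s → −∞, and let g : ℝ → [0,∞) be measurable with ∫_{−∞}^τ e^{δζ} g(ζ) dζ < ∞ for every τ ∈ ℝ. Then for every τ ∈ ℝ, ∫_{−∞}^0 exp( (σ²/2)ζ + 2σ ∫_ζ^0 y(η) dη − 2σ y(ζ) ) g(ζ+τ) dζ < ∞. (This is the finiteness statement (3.21) in the proof of Lemma 3.6, giving that the pullback absorbing radius is finite; in the paper y(ζ) = y(θ_ζ ω) is the stationary Ornstein–Uhlenbeck process and g(ζ) = ‖f(·,ζ)‖²_{L²(ℝ²)}.) -/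
/-! Writing the exponent as `δ ζ + h ζ`, the sublinearity of `y` and of its running average gives
`h ζ / ζ → σ²/2 - δ > 0` as `ζ → -∞`, so the continuous function `h` tends to `-∞` and is bounded
above on `(-∞, 0]`. The integrand is therefore dominated by a constant times
`e^{δ(ζ+τ)} g(ζ+τ)`, whose integral over `(-∞, 0]` is the assumed finite one over `(-∞, τ]`. -/

open MeasureTheory Filter intervalIntegral
open scoped Topology ENNReal

theorem continuous_intervalIntegral_lowerLimit {y : ℝ → ℝ} (hy : Continuous y) (a : ℝ) :
    Continuous fun s : ℝ => ∫ η in s..a, y η := by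
  simp_rw [integral_symm a]
  fun_prop

theorem tendsto_linear_add_integral_sub_div_self {y : ℝ → ℝ} (a b : ℝ)
    (hy1 : Tendsto (fun s : ℝ => y s / s) atBot (𝓝 0))
    (hy2 : Tendsto (fun s : ℝ => (1 / s) * ∫ η in s..(0:ℝ), y η) atBot (𝓝 0)) :
    Tendsto (fun s => (a * s + b * (∫ η in s..(0:ℝ), y η) - b * y s) / s) atBot (𝓝 a) := by
  have hlim := (tendsto_const_nhds (x := a)).add (hy2.const_mul b) |>.sub (hy1.const_mul b)
  rw [mul_zero, add_zero, sub_zero] at hlim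
  refine hlim.congr' ?_
  filter_upwards [eventually_lt_atBot 0] with s hs
  field_simp [hs.ne]

theorem Continuous.bddAbove_image_Iic_of_tendsto_atBot {α β : Type*} [LinearOrder α]
    [TopologicalSpace α] [CompactIccSpace α] [Nonempty α] [LinearOrder β] [TopologicalSpace β]
    [ClosedIciTopology β] [Nonempty β] {f : α → β} (hf : Continuous f)
    (hlim : Tendsto f atBot atBot) (a : α) : BddAbove (f '' Set.Iic a) := by
  obtain ⟨b⟩ := ‹Nonempty β›
  obtain ⟨T, hT⟩ := eventually_atBot.1 (hlim.eventually (eventually_le_atBot b))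
  obtain ⟨C, hC⟩ := (isCompact_Icc (a := T) (b := a)).bddAbove_image hf.continuousOn
  refine ⟨max C b, ?_⟩
  rintro _ ⟨x, hx, rfl⟩
  rcases le_or_gt x T with hle | hlt
  · exact (hT x hle).trans (le_max_right _ _)
  · exact (hC ⟨x, ⟨hlt.le, hx⟩, rfl⟩).trans (le_max_left _ _)

theorem tendsto_atBot_of_tendsto_div_self {𝕜 : Type*} [Field 𝕜] [LinearOrder 𝕜]
    [IsStrictOrderedRing 𝕜] [TopologicalSpace 𝕜] [OrderTopology 𝕜] {u : 𝕜 → 𝕜} {c : 𝕜}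
    (hc : 0 < c) (hu : Tendsto (fun s => u s / s) atBot (𝓝 c)) : Tendsto u atBot atBot := by
  refine (tendsto_id.atBot_mul_pos hc hu).congr' ?_
  filter_upwards [eventually_lt_atBot 0] with s hs
  exact mul_div_cancel₀ _ hs.ne

theorem setLIntegral_ofReal_exp_mul_lt_top {α : Type*} [MeasurableSpace α] {μ : Measure α}
    {s : Set α} {F w g : α → ℝ} (M : ℝ) (hs : MeasurableSet s) (hg : ∀ x ∈ s, 0 ≤ g x)
    (hF : ∀ x ∈ s, F x ≤ M + w x)
    (hw : ∫⁻ x in s, ENNReal.ofReal (Real.exp (w x) * g x) ∂μ < ∞) :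
    ∫⁻ x in s, ENNReal.ofReal (Real.exp (F x) * g x) ∂μ < ∞ := by
  have hle : ∀ x ∈ s, ENNReal.ofReal (Real.exp (F x) * g x) ≤
      ENNReal.ofReal (Real.exp M) * ENNReal.ofReal (Real.exp (w x) * g x) := fun x hx => by
    rw [← ENNReal.ofReal_mul (Real.exp_nonneg _), ← mul_assoc, ← Real.exp_add]
    gcongr
    exacts [hg x hx, hF x hx]
  calc ∫⁻ x in s, ENNReal.ofReal (Real.exp (F x) * g x) ∂μ
      ≤ ∫⁻ x in s, ENNReal.ofReal (Real.exp M) * ENNReal.ofReal (Real.exp (w x) * g x) ∂μ :=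
        setLIntegral_mono' hs hle
    _ = ENNReal.ofReal (Real.exp M) * ∫⁻ x in s, ENNReal.ofReal (Real.exp (w x) * g x) ∂μ :=
        lintegral_const_mul' _ _ ENNReal.ofReal_ne_top
    _ < ∞ := ENNReal.mul_lt_top ENNReal.ofReal_lt_top hw

theorem setLIntegral_Iic_comp_add_right (f : ℝ → ℝ≥0∞) (a τ : ℝ) :
    ∫⁻ x in Set.Iic a, f (x + τ) = ∫⁻ x in Set.Iic (a + τ), f x := by
  have hpre : (· + τ) ⁻¹' Set.Iic (a + τ) = Set.Iic a := by
    ext x; simp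
  rw [← hpre]
  exact (measurePreserving_add_right volume τ).setLIntegral_comp_preimage_emb
    (MeasurableEquiv.addRight τ).measurableEmbedding f _

theorem absorbing_radius_finite_general (σ δ : ℝ) (hδ : δ < σ ^ 2 / 2)
    (y : ℝ → ℝ) (hy : Continuous y)
    (hy1 : Tendsto (fun s : ℝ => y s / s) atBot (nhds 0))
    (hy2 : Tendsto (fun s : ℝ => (1 / s) * ∫ η in s..(0:ℝ), y η) atBot (nhds 0))
    (g : ℝ → ℝ) (hg0 : ∀ x, 0 ≤ g x)
    (hgint : ∀ τ : ℝ, (∫⁻ ζ in Set.Iic τ, ENNReal.ofReal (Real.exp (δ * ζ) * g ζ)) < ⊤) :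
    ∀ τ : ℝ,
      (∫⁻ ζ in Set.Iic (0:ℝ),
        ENNReal.ofReal
          (Real.exp (σ ^ 2 / 2 * ζ + 2 * σ * (∫ η in ζ..(0:ℝ), y η) - 2 * σ * y ζ)
            * g (ζ + τ))) < ⊤ := by
  intro τ
  set h : ℝ → ℝ := fun ζ =>
    (σ ^ 2 / 2 - δ) * ζ + 2 * σ * (∫ η in ζ..(0:ℝ), y η) - 2 * σ * y ζ
  have hcont : Continuous h := by
    have := continuous_intervalIntegral_lowerLimit hy 0
    fun_prop
  have hlim : Tendsto h atBot atBot := tendsto_atBot_of_tendsto_div_self (sub_pos.2 hδ)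
    (tendsto_linear_add_integral_sub_div_self _ _ hy1 hy2)
  obtain ⟨M, hM⟩ := hcont.bddAbove_image_Iic_of_tendsto_atBot hlim 0
  refine setLIntegral_ofReal_exp_mul_lt_top (w := fun ζ => δ * (ζ + τ)) (M - δ * τ)
    measurableSet_Iic (fun _ _ => hg0 _) (fun ζ hζ => ?_) ?_
  · have := hM ⟨ζ, hζ, rfl⟩
    simp only [h] at this
    linarith
  · have hshift := setLIntegral_Iic_comp_add_right
      (fun x => ENNReal.ofReal (Real.exp (δ * x) * g x)) 0 τ
    rw [zero_add] at hshift
    exact hshift ▸ hgint τ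

/-- The finiteness statement (3.21) in the proof of Lemma 3.6: with `σ > 0`,
`δ ∈ [0, σ²/2)`, a continuous `y : ℝ → ℝ` with `y(s)/s → 0` and `(1/s)∫_s^0 y → 0` as
`s → -∞`, and `g ≥ 0` measurable with `∫_{-∞}^τ e^{δζ} g(ζ) dζ < ∞` for all `τ`, one has
`∫_{-∞}^0 exp((σ²/2)ζ + 2σ∫_ζ^0 y(η)dη - 2σ y(ζ)) g(ζ+τ) dζ < ∞` for every `τ`. -/
theorem absorbing_radius_finite (σ δ : ℝ) (hσ : 0 < σ) (hδ0 : 0 ≤ δ) (hδ : δ < σ ^ 2 / 2)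
    (y : ℝ → ℝ) (hy : Continuous y)
    (hy1 : Tendsto (fun s : ℝ => y s / s) atBot (nhds 0))
    (hy2 : Tendsto (fun s : ℝ => (1 / s) * ∫ η in s..(0:ℝ), y η) atBot (nhds 0))
    (g : ℝ → ℝ) (hgm : Measurable g) (hg0 : ∀ x, 0 ≤ g x)
    (hgint : ∀ τ : ℝ, (∫⁻ ζ in Set.Iic τ, ENNReal.ofReal (Real.exp (δ * ζ) * g ζ)) < ⊤) :
    ∀ τ : ℝ,
      (∫⁻ ζ in Set.Iic (0:ℝ),
        ENNReal.ofReal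
          (Real.exp (σ ^ 2 / 2 * ζ + 2 * σ * (∫ η in ζ..(0:ℝ), y η) - 2 * σ * y ζ)
            * g (ζ + τ))) < ⊤ :=
  absorbing_radius_finite_general σ δ hδ y hy hy1 hy2 g hg0 hgint
end

section
/- Fix ν, σ > 0, m ∈ ℕ, a twice continuously differentiable compactly supported function ψ : ℝ^m → ℝ, divergence-free vector fields e₁, …, e_m ∈ C²_c(ℝ²; ℝ²), and f ∈ L²(ℝ²; ℝ²). For v ∈ L²(ℝ²; ℝ²) set Λ'(v) = Σ_{i=1}^m ∂_iψ((v,e₁),…,(v,e_m)) e_i, where (·,·) is the L² inner product. Then the three maps G₁(v) = ν (v, ΔΛ'(v)) + b(v, Λ'(v), v) + (f, Λ'(v)), G₂(v) = σ (v, Λ'(v)), and G₃(v) = σ² Σ_{i,j=1}^m ∂_{i,j}ψ((v,e₁),…,(v,e_m)) (v,e_i)(v,e_j) are well-defined real-valued functions on L²(ℝ²; ℝ²) and are continuous with respect to the L² norm. (This is Lemma 4.11; G₁(v) equals ⟨L(v,t), Λ'(v)⟩ for the Navier–Stokes drift L(v,t) = −νAv − B(v) + 𝒫f after integration by parts against the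 divergence-free test field Λ'(v).) -/
open MeasureTheory
open scoped RealInnerProductSpace

noncomputable section

abbrev E2 : Type := EuclideanSpace ℝ (Fin 2)

/-- Partial derivative of a vector field `v : ℝ² → ℝ²` in the `i`-th coordinate direction. -/
def pdv (i : Fin 2) (v : E2 → E2) : E2 → E2 :=
  fun x => fderiv ℝ v x (EuclideanSpace.single i 1)

/-- The trilinear form `b(u,v,w) = ∑_{i,j} ∫ u_i ∂v_j/∂x_i w_j dx`. -/
def triB (u v w : E2 → E2) : ℝ :=
  ∫ x : E2, ∑ i : Fin 2, ∑ j : Fin 2, u x i * pdv i v x j * w x j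

/-- `u` is divergence-free: `∑ᵢ ∂uᵢ/∂xᵢ = 0` everywhere. -/
def DivFree (u : E2 → E2) : Prop := ∀ x : E2, ∑ i : Fin 2, pdv i u x i = 0

/-- The `L²(ℝ²;ℝ²)` inner product `(v,g) = ∫ ⟨v(x), g(x)⟩ dx`. -/
def innerL2 (v g : E2 → E2) : ℝ := ∫ x : E2, ⟪v x, g x⟫

/-- First partial derivative `∂_i ψ` of `ψ : ℝ^m → ℝ`. -/
def dpsi (m : ℕ) (ψ : (Fin m → ℝ) → ℝ) (i : Fin m) (a : Fin m → ℝ) : ℝ :=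
  fderiv ℝ ψ a (Pi.single i 1)

/-- Second partial derivative `∂_{i,j} ψ` of `ψ : ℝ^m → ℝ`. -/
def d2psi (m : ℕ) (ψ : (Fin m → ℝ) → ℝ) (i j : Fin m) (a : Fin m → ℝ) : ℝ :=
  fderiv ℝ (fun b => fderiv ℝ ψ b (Pi.single i 1)) a (Pi.single j 1)

/-- `Λ'(v) = ∑ᵢ ∂_iψ((v,e₁),…,(v,e_m)) eᵢ`, the Fréchet derivative of the cylindrical test
functional `Λ(v) = ψ((v,e₁),…,(v,e_m))`. -/
def LamP (m : ℕ) (ψ : (Fin m → ℝ) → ℝ) (e : Fin m → E2 → E2) (v : E2 → E2) : E2 → E2 :=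
  fun x => ∑ i : Fin m, dpsi m ψ i (fun i' => innerL2 v (e i')) • e i x

/-- `G₁(v) = ν (v, ΔΛ'(v)) + b(v, Λ'(v), v) + (f, Λ'(v))`, i.e. `⟨L(v,t), Λ'(v)⟩`
after integration by parts against the divergence-free test field `Λ'(v)`. -/
def G1 (ν : ℝ) (m : ℕ) (ψ : (Fin m → ℝ) → ℝ) (e : Fin m → E2 → E2) (f : E2 → E2)
    (v : E2 → E2) : ℝ :=
  ν * (∫ x : E2, ∑ j : Fin 2, v x j * ∑ i : Fin 2, pdv i (pdv i (LamP m ψ e v)) x j)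
    + triB v (LamP m ψ e v) v + innerL2 f (LamP m ψ e v)

/-- `G₂(v) = σ (v, Λ'(v))`. -/
def G2 (σ : ℝ) (m : ℕ) (ψ : (Fin m → ℝ) → ℝ) (e : Fin m → E2 → E2) (v : E2 → E2) : ℝ :=
  σ * innerL2 v (LamP m ψ e v)

/-- `G₃(v) = Λ''(v)(σv)(σv) = σ² ∑_{i,j} ∂_{i,j}ψ((v,e₁),…,(v,e_m)) (v,eᵢ)(v,eⱼ)`. -/
def G3 (σ : ℝ) (m : ℕ) (ψ : (Fin m → ℝ) → ℝ) (e : Fin m → E2 → E2) (v : E2 → E2) : ℝ :=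
  σ ^ 2 * ∑ i : Fin m, ∑ j : Fin m,
    d2psi m ψ i j (fun i' => innerL2 v (e i')) * innerL2 v (e i) * innerL2 v (e j)

/-!
`Λ'(v) = ∑ₖ cₖ(v) eₖ` is a finite combination of fixed `C²_c` fields whose coefficients
`cₖ(v) = ∂ₖψ((v,e₁),…,(v,e_m))` depend continuously on `v ∈ L²`, because each `(v, eᵢ)` does.
Every integrand in `G₁, G₂` therefore expands, with these coefficients, into pairings of `v` or
`f` with the fixed `L²` fields `eₖ` and `Δeₖ`, and into the quadratic forms
`b(v, eₖ, v) = ∫ ⟪Deₖ(x) v(x), v(x)⟫`, which are continuous on `L²` since `Deₖ` is bounded.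
-/

section L2

variable {α H : Type*} [MeasurableSpace α] {μ : Measure α}
  [NormedAddCommGroup H] [InnerProductSpace ℝ H]

theorem MeasureTheory.MemLp.integrable_inner {f g : α → H} (hf : MemLp f 2 μ)
    (hg : MemLp g 2 μ) : Integrable (fun x => ⟪f x, g x⟫) μ :=
  memLp_one_iff_integrable.1 ((innerSL ℝ).memLp_of_bilin 1 hf hg)

theorem MeasureTheory.MemLp.integrable_inner_apply {A : α → H →L[ℝ] H} {v w : α → H}
    (hA : MemLp A ⊤ μ) (hv : MemLp v 2 μ) (hw : MemLp w 2 μ) :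
    Integrable (fun x => ⟪A x (v x), w x⟫) μ :=
  ((ContinuousLinearMap.id ℝ (H →L[ℝ] H)).memLp_of_bilin 2 hA hv).integrable_inner hw

theorem continuous_integral_inner_left {g : α → H} (hg : MemLp g 2 μ) :
    Continuous fun v : Lp H 2 μ => ∫ x, ⟪v x, g x⟫ ∂μ := by
  have h : (fun v : Lp H 2 μ => ∫ x, ⟪v x, g x⟫ ∂μ) = fun v => ⟪v, hg.toLp g⟫ := by
    ext1 v
    rw [L2.inner_def]
    exact integral_congr_ae (hg.coeFn_toLp.mono fun x hx => by simp [hx])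
  rw [h]
  exact continuous_id.inner continuous_const

/-- By Hölder with exponents `∞, 2`, pointwise application of a bounded `A` is a bounded operator
on `L²`. -/
theorem continuous_integral_inner_apply_self {A : α → H →L[ℝ] H} (hA : MemLp A ⊤ μ) :
    Continuous fun v : Lp H 2 μ => ∫ x, ⟪A x (v x), v x⟫ ∂μ := by
  let B := ContinuousLinearMap.id ℝ (H →L[ℝ] H)
  let T := B.holderL μ ⊤ 2 2 (hA.toLp A)
  have h : (fun v : Lp H 2 μ => ∫ x, ⟪A x (v x), v x⟫ ∂μ) = fun v => ⟪T v, v⟫ := by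
    ext1 v
    rw [L2.inner_def]
    refine integral_congr_ae ?_
    filter_upwards [B.coeFn_holder (r := 2) (hA.toLp A) v, hA.coeFn_toLp] with x hT hA
    simp [T, B, hT, hA]
  rw [h]
  exact T.continuous.inner continuous_id

theorem integral_fintype_sum_const_mul {ι : Type*} [Fintype ι] (c : ι → ℝ) {F : ι → α → ℝ}
    (hF : ∀ k, Integrable (F k) μ) :
    ∫ x, ∑ k, c k * F k x ∂μ = ∑ k, c k * ∫ x, F k x ∂μ := by
  rw [integral_finsetSum _ fun k _ => (hF k).const_mul (c k)]
  simp_rw [integral_const_mul]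

end L2

theorem fderiv_fintype_sum_smul {E F ι : Type*} [NormedAddCommGroup E] [NormedSpace ℝ E]
    [NormedAddCommGroup F] [NormedSpace ℝ F] [Fintype ι] (c : ι → ℝ) {g : ι → E → F} {x : E}
    (hg : ∀ k, DifferentiableAt ℝ (g k) x) :
    fderiv ℝ (fun y => ∑ k, c k • g k y) x = ∑ k, c k • fderiv ℝ (g k) x := by
  rw [fderiv_fun_sum (A := fun k y => c k • g k y) fun k _ => (hg k).const_smul (c k)]
  exact Finset.sum_congr rfl fun k _ => fderiv_fun_const_smul (hg k) (c k)

theorem continuous_dpsi {m : ℕ} {ψ : (Fin m → ℝ) → ℝ} (hψ : ContDiff ℝ 1 ψ) (i : Fin m) :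
    Continuous (dpsi m ψ i) :=
  (hψ.continuous_fderiv one_ne_zero).clm_apply continuous_const

theorem continuous_d2psi {m : ℕ} {ψ : (Fin m → ℝ) → ℝ} (hψ : ContDiff ℝ 2 ψ) (i j : Fin m) :
    Continuous (d2psi m ψ i j) :=
  (((hψ.fderiv_right (m := 1) le_rfl).clm_apply contDiff_const).continuous_fderiv
    one_ne_zero).clm_apply continuous_const

theorem E2.inner_eq_sum_mul (a b : E2) : ⟪a, b⟫ = ∑ j, a j * b j := by
  simp [PiLp.inner_apply, mul_comm]

theorem contDiff_pdv {n : WithTop ℕ∞} {g : E2 → E2} (hg : ContDiff ℝ (n + 1) g) (i : Fin 2) :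
    ContDiff ℝ n (pdv i g) :=
  (hg.fderiv_right le_rfl).clm_apply contDiff_const

theorem HasCompactSupport.pdv {g : E2 → E2} (hg : HasCompactSupport g) (i : Fin 2) :
    HasCompactSupport (pdv i g) :=
  hg.fderiv_apply (𝕜 := ℝ) _

theorem pdv_fintype_sum_smul {ι : Type*} [Fintype ι] (c : ι → ℝ) {g : ι → E2 → E2}
    (hg : ∀ k, Differentiable ℝ (g k)) (i : Fin 2) :
    pdv i (fun y => ∑ k, c k • g k y) = fun x => ∑ k, c k • pdv i (g k) x := by
  ext1 x
  simp [pdv, fderiv_fintype_sum_smul c fun k => hg k x]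

theorem sum_sum_mul_pdv_mul (g : E2 → E2) (x u w : E2) :
    ∑ i, ∑ j, u i * pdv i g x j * w j = ⟪fderiv ℝ g x u, w⟫ := by
  conv_rhs => rw [← (EuclideanSpace.basisFun (Fin 2) ℝ).sum_repr u]
  simp [pdv, E2.inner_eq_sum_mul]
  ring

def coordLaplacian (g : E2 → E2) (x : E2) : E2 := ∑ i, pdv i (pdv i g) x

theorem sum_mul_sum_pdv_pdv (g : E2 → E2) (x u : E2) :
    ∑ j, u j * ∑ i, pdv i (pdv i g) x j = ⟪u, coordLaplacian g x⟫ := by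
  simp [coordLaplacian, E2.inner_eq_sum_mul]

theorem ContDiff.continuous_coordLaplacian {g : E2 → E2} (hg : ContDiff ℝ 2 g) :
    Continuous (coordLaplacian g) :=
  continuous_finsetSum _ fun i _ =>
    (contDiff_pdv (n := 0) (contDiff_pdv (n := 1) hg i) i).continuous

theorem HasCompactSupport.coordLaplacian {g : E2 → E2} (hg : HasCompactSupport g) :
    HasCompactSupport (coordLaplacian g) := by
  rw [show _root_.coordLaplacian g = _root_.pdv 0 (_root_.pdv 0 g) + _root_.pdv 1 (_root_.pdv 1 g)
    by ext1 x; simp [_root_.coordLaplacian, Fin.sum_univ_two]]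
  exact ((hg.pdv 0).pdv 0).add ((hg.pdv 1).pdv 1)

theorem ContDiff.memLp_coordLaplacian {p : ENNReal} {μ : Measure E2} [IsFiniteMeasureOnCompacts μ]
    {g : E2 → E2} (hg : ContDiff ℝ 2 g) (hgc : HasCompactSupport g) :
    MemLp (coordLaplacian g) p μ :=
  hg.continuous_coordLaplacian.memLp_of_hasCompactSupport hgc.coordLaplacian

theorem ContDiff.memLp_fderiv {p : ENNReal} {μ : Measure E2} [IsFiniteMeasureOnCompacts μ]
    {g : E2 → E2} (hg : ContDiff ℝ 1 g) (hgc : HasCompactSupport g) :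
    MemLp (fderiv ℝ g) p μ :=
  (hg.continuous_fderiv one_ne_zero).memLp_of_hasCompactSupport (hgc.fderiv (𝕜 := ℝ))

theorem coordLaplacian_fintype_sum_smul {ι : Type*} [Fintype ι] (c : ι → ℝ) {g : ι → E2 → E2}
    (hg : ∀ k, ContDiff ℝ 2 (g k)) :
    coordLaplacian (fun y => ∑ k, c k • g k y) = fun x => ∑ k, c k • coordLaplacian (g k) x := by
  ext1 x
  have hg1 : ∀ k, Differentiable ℝ (g k) := fun k => (hg k).differentiable two_ne_zero
  have hg2 : ∀ i k, Differentiable ℝ (pdv i (g k)) := fun i k =>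
    (contDiff_pdv (n := 1) (hg k) i).differentiable one_ne_zero
  simp only [coordLaplacian, pdv_fintype_sum_smul c hg1, pdv_fintype_sum_smul c (hg2 _),
    Finset.smul_sum]
  exact Finset.sum_comm

section LinearCombination

variable {ι : Type*} [Fintype ι] (c : ι → ℝ) {e : ι → E2 → E2}

theorem integrable_inner_sum_smul {g : E2 → E2} (hg : MemLp g 2 volume)
    (he : ∀ k, MemLp (e k) 2 volume) :
    Integrable (fun x => ⟪g x, ∑ k, c k • e k x⟫) volume := by
  simp_rw [inner_sum, real_inner_smul_right]
  exact integrable_finsetSum _ fun k _ => (hg.integrable_inner (he k)).const_mul (c k)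

theorem innerL2_sum_smul {g : E2 → E2} (hg : MemLp g 2 volume)
    (he : ∀ k, MemLp (e k) 2 volume) :
    innerL2 g (fun x => ∑ k, c k • e k x) = ∑ k, c k * innerL2 g (e k) := by
  simp_rw [innerL2, inner_sum, real_inner_smul_right]
  exact integral_fintype_sum_const_mul c fun k => hg.integrable_inner (he k)

theorem sum_mul_laplacian_sum_smul (he : ∀ k, ContDiff ℝ 2 (e k)) (u : E2 → E2) :
    (fun x => ∑ j, u x j * ∑ i, pdv i (pdv i (fun y => ∑ k, c k • e k y)) x j) =
      fun x => ∑ k, c k * ⟪u x, coordLaplacian (e k) x⟫ := by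
  ext1 x
  rw [sum_mul_sum_pdv_pdv, coordLaplacian_fintype_sum_smul c he]
  simp only [inner_sum, real_inner_smul_right]

theorem sum_sum_mul_pdv_sum_smul_mul (he : ∀ k, Differentiable ℝ (e k)) (u : E2 → E2) :
    (fun x => ∑ i, ∑ j, u x i * pdv i (fun y => ∑ k, c k • e k y) x j * u x j) =
      fun x => ∑ k, c k * ⟪fderiv ℝ (e k) x (u x), u x⟫ := by
  ext1 x
  rw [sum_sum_mul_pdv_mul, fderiv_fintype_sum_smul c fun k => he k x]
  simp [sum_inner, real_inner_smul_left]

variable (he : ∀ k, ContDiff ℝ 2 (e k)) (hec : ∀ k, HasCompactSupport (e k))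
  {u : E2 → E2} (hu : MemLp u 2 volume)
include he hec hu

theorem integrable_laplacian_pairing_sum_smul :
    Integrable (fun x => ∑ j, u x j * ∑ i, pdv i (pdv i (fun y => ∑ k, c k • e k y)) x j)
      volume := by
  rw [sum_mul_laplacian_sum_smul c he]
  exact integrable_finsetSum _ fun k _ =>
    (hu.integrable_inner ((he k).memLp_coordLaplacian (hec k))).const_mul (c k)

theorem integral_laplacian_pairing_sum_smul :
    ∫ x, ∑ j, u x j * ∑ i, pdv i (pdv i (fun y => ∑ k, c k • e k y)) x j =
      ∑ k, c k * innerL2 u (coordLaplacian (e k)) := by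
  rw [sum_mul_laplacian_sum_smul c he]
  exact integral_fintype_sum_const_mul c fun k =>
    hu.integrable_inner ((he k).memLp_coordLaplacian (hec k))

theorem integrable_triB_integrand_sum_smul :
    Integrable (fun x => ∑ i, ∑ j, u x i * pdv i (fun y => ∑ k, c k • e k y) x j * u x j)
      volume := by
  rw [sum_sum_mul_pdv_sum_smul_mul c fun k => (he k).differentiable two_ne_zero]
  exact integrable_finsetSum _ fun k _ =>
    ((((he k).of_le one_le_two).memLp_fderiv (hec k)).integrable_inner_apply hu hu).const_mul (c k)

theorem triB_sum_smul :
    triB u (fun y => ∑ k, c k • e k y) u =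
      ∑ k, c k * ∫ x, ⟪fderiv ℝ (e k) x (u x), u x⟫ := by
  rw [triB, sum_sum_mul_pdv_sum_smul_mul c fun k => (he k).differentiable two_ne_zero]
  exact integral_fintype_sum_const_mul c fun k =>
    (((he k).of_le one_le_two).memLp_fderiv (hec k)).integrable_inner_apply hu hu

end LinearCombination

section CylindricalFunctional

variable {m : ℕ} {ψ : (Fin m → ℝ) → ℝ} {e : Fin m → E2 → E2}

def lamPCoeff (m : ℕ) (ψ : (Fin m → ℝ) → ℝ) (e : Fin m → E2 → E2) (v : E2 → E2) (k : Fin m) :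
    ℝ :=
  dpsi m ψ k (fun i => innerL2 v (e i))

theorem LamP_eq_sum_smul (v : E2 → E2) :
    LamP m ψ e v = fun x => ∑ k, lamPCoeff m ψ e v k • e k x := rfl

theorem continuous_innerL2_left {g : E2 → E2} (hg : MemLp g 2 volume) :
    Continuous fun v : Lp E2 2 volume => innerL2 v g :=
  continuous_integral_inner_left hg

theorem G1_eq_sum (ν : ℝ) (he : ∀ k, ContDiff ℝ 2 (e k)) (hec : ∀ k, HasCompactSupport (e k))
    {f v : E2 → E2} (hf : MemLp f 2 volume) (hv : MemLp v 2 volume) :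
    G1 ν m ψ e f v =
      ν * (∑ k, lamPCoeff m ψ e v k * innerL2 v (coordLaplacian (e k))) +
      (∑ k, lamPCoeff m ψ e v k * ∫ x, ⟪fderiv ℝ (e k) x (v x), v x⟫) +
      ∑ k, lamPCoeff m ψ e v k * innerL2 f (e k) := by
  rw [G1, LamP_eq_sum_smul, integral_laplacian_pairing_sum_smul _ he hec hv,
    triB_sum_smul _ he hec hv,
    innerL2_sum_smul _ hf fun k => (he k).continuous.memLp_of_hasCompactSupport (hec k)]

theorem G2_eq_sum (σ : ℝ) (he : ∀ k, MemLp (e k) 2 volume) {v : E2 → E2}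
    (hv : MemLp v 2 volume) :
    G2 σ m ψ e v = σ * ∑ k, lamPCoeff m ψ e v k * innerL2 v (e k) := by
  rw [G2, LamP_eq_sum_smul, innerL2_sum_smul _ hv he]

end CylindricalFunctional

theorem G_maps_well_defined_and_continuous_general
    (ν σ : ℝ) (m : ℕ)
    (ψ : (Fin m → ℝ) → ℝ) (hψ : ContDiff ℝ 2 ψ)
    (e : Fin m → E2 → E2)
    (he : ∀ i, ContDiff ℝ 2 (e i)) (hec : ∀ i, HasCompactSupport (e i))
    (f : E2 → E2) (hf : MemLp f 2 (volume : Measure E2)) :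
    (∀ v : Lp E2 2 (volume : Measure E2), ∀ i : Fin m,
        Integrable (fun x : E2 => ⟪(v : E2 → E2) x, e i x⟫) volume) ∧
    (∀ v : Lp E2 2 (volume : Measure E2),
        Integrable (fun x : E2 =>
          ∑ j : Fin 2, (v : E2 → E2) x j *
            ∑ i : Fin 2, pdv i (pdv i (LamP m ψ e (v : E2 → E2))) x j) volume) ∧
    (∀ v : Lp E2 2 (volume : Measure E2),
        Integrable (fun x : E2 =>
          ∑ i : Fin 2, ∑ j : Fin 2, (v : E2 → E2) x i *
            pdv i (LamP m ψ e (v : E2 → E2)) x j * (v : E2 → E2) x j) volume) ∧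
    (∀ v : Lp E2 2 (volume : Measure E2),
        Integrable (fun x : E2 => ⟪f x, LamP m ψ e (v : E2 → E2) x⟫) volume) ∧
    (∀ v : Lp E2 2 (volume : Measure E2),
        Integrable (fun x : E2 => ⟪(v : E2 → E2) x, LamP m ψ e (v : E2 → E2) x⟫) volume) ∧
    Continuous (fun v : Lp E2 2 (volume : Measure E2) => G1 ν m ψ e f (v : E2 → E2)) ∧
    Continuous (fun v : Lp E2 2 (volume : Measure E2) => G2 σ m ψ e (v : E2 → E2)) ∧
    Continuous (fun v : Lp E2 2 (volume : Measure E2) => G3 σ m ψ e (v : E2 → E2)) := by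
  have he2 : ∀ k, MemLp (e k) 2 volume := fun k =>
    (he k).continuous.memLp_of_hasCompactSupport (hec k)
  have hpair : ∀ k, Continuous fun v : Lp E2 2 volume => innerL2 v (e k) := fun k =>
    continuous_innerL2_left (he2 k)
  have hcoord : Continuous fun (v : Lp E2 2 volume) (i : Fin m) => innerL2 v (e i) :=
    continuous_pi hpair
  have hcoeff : ∀ k, Continuous fun v : Lp E2 2 volume => lamPCoeff m ψ e v k := fun k =>
    (continuous_dpsi (hψ.of_le one_le_two) k).comp hcoord
  refine ⟨fun v i => (Lp.memLp v).integrable_inner (he2 i),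
    fun v => integrable_laplacian_pairing_sum_smul _ he hec (Lp.memLp v),
    fun v => integrable_triB_integrand_sum_smul _ he hec (Lp.memLp v),
    fun v => integrable_inner_sum_smul _ hf he2,
    fun v => integrable_inner_sum_smul _ (Lp.memLp v) he2, ?_, ?_, ?_⟩
  · have hlap : ∀ k, Continuous fun v : Lp E2 2 volume => innerL2 v (coordLaplacian (e k)) :=
      fun k => continuous_innerL2_left ((he k).memLp_coordLaplacian (hec k))
    have htri : ∀ k, Continuous fun v : Lp E2 2 volume => ∫ x, ⟪fderiv ℝ (e k) x (v x), v x⟫ :=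
      fun k => continuous_integral_inner_apply_self
        (((he k).of_le one_le_two).memLp_fderiv (hec k))
    exact Continuous.congr (by fun_prop) fun v => (G1_eq_sum ν he hec hf (Lp.memLp v)).symm
  · exact Continuous.congr (by fun_prop) fun v => (G2_eq_sum σ he2 (Lp.memLp v)).symm
  · have hd2 : ∀ i j, Continuous fun v : Lp E2 2 volume =>
        d2psi m ψ i j fun i' => innerL2 v (e i') :=
      fun i j => (continuous_d2psi hψ i j).comp hcoord
    unfold G3
    fun_prop

/-- Lemma 4.11: for `Λ ∈ 𝒥` (cylindrical test functionals built from `ψ ∈ C²_c(ℝ^m)` and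
divergence-free `e₁,…,e_m ∈ C²_c(ℝ²;ℝ²)`) and `f ∈ L²(ℝ²;ℝ²)`, the maps
`G₁(v) = ⟨L(v,t), Λ'(v)⟩`, `G₂(v) = σ(v, Λ'(v))` and `G₃(v) = Λ''(v)(σv)(σv)` are
well-defined (all defining integrals converge) and continuous on `L²(ℝ²;ℝ²)`. -/
theorem G_maps_well_defined_and_continuous
    (ν σ : ℝ) (hν : 0 < ν) (hσ : 0 < σ) (m : ℕ)
    (ψ : (Fin m → ℝ) → ℝ) (hψ : ContDiff ℝ 2 ψ) (hψc : HasCompactSupport ψ)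
    (e : Fin m → E2 → E2)
    (he : ∀ i, ContDiff ℝ 2 (e i)) (hec : ∀ i, HasCompactSupport (e i))
    (hediv : ∀ i, DivFree (e i))
    (f : E2 → E2) (hf : MemLp f 2 (volume : Measure E2)) :
    (∀ v : Lp E2 2 (volume : Measure E2), ∀ i : Fin m,
        Integrable (fun x : E2 => ⟪(v : E2 → E2) x, e i x⟫) volume) ∧
    (∀ v : Lp E2 2 (volume : Measure E2),
        Integrable (fun x : E2 =>
          ∑ j : Fin 2, (v : E2 → E2) x j *
            ∑ i : Fin 2, pdv i (pdv i (LamP m ψ e (v : E2 → E2))) x j) volume) ∧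
    (∀ v : Lp E2 2 (volume : Measure E2),
        Integrable (fun x : E2 =>
          ∑ i : Fin 2, ∑ j : Fin 2, (v : E2 → E2) x i *
            pdv i (LamP m ψ e (v : E2 → E2)) x j * (v : E2 → E2) x j) volume) ∧
    (∀ v : Lp E2 2 (volume : Measure E2),
        Integrable (fun x : E2 => ⟪f x, LamP m ψ e (v : E2 → E2) x⟫) volume) ∧
    (∀ v : Lp E2 2 (volume : Measure E2),
        Integrable (fun x : E2 => ⟪(v : E2 → E2) x, LamP m ψ e (v : E2 → E2) x⟫) volume) ∧
    Continuous (fun v : Lp E2 2 (volume : Measure E2) => G1 ν m ψ e f (v : E2 → E2)) ∧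
    Continuous (fun v : Lp E2 2 (volume : Measure E2) => G2 σ m ψ e (v : E2 → E2)) ∧
    Continuous (fun v : Lp E2 2 (volume : Measure E2) => G3 σ m ψ e (v : E2 → E2)) :=
  G_maps_well_defined_and_continuous_general ν σ m ψ hψ e he hec f hf
end
end
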